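/- Let k > 0 and σ > 0. Any maximizer a* of the function ã ↦ (ã + k/σ)² ρ(ã) over the interval [0, τ*] satisfies 0 < a* < τ*; that is, neither 0 nor τ* maximizes this function on [0, τ*]. -/

import Mathlib

/-! Put `c = k/σ` and `f a = (a + c)² ρ a`.  Since `ρ` is even, `ρ'(0) = 0`, so
`f'(0) = 2cρ(0) > 0` and `f` increases to the right of `0`.  At the interior maximum `τ*` of
`τ²ρ(τ)` we have `τ*² ρ'(τ*) = -2τ*ρ(τ*)`, which gives `τ*² f'(τ*) = -2cτ*(τ* + c)ρ(τ*) < 0`, so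
`f` decreases to the left of `τ*`.  Differentiability of `ρ` comes from differentiating under the
integral sign after the shift `y = t + a`, which moves the parameter into the logistic factor. -/

open Real MeasureTheory

noncomputable def gaussPdf (x : ℝ) : ℝ :=
  (Real.sqrt (2 * Real.pi))⁻¹ * Real.exp (-(x ^ 2) / 2)

noncomputable def ρ (a : ℝ) : ℝ :=
  ∫ y : ℝ, (1 / (Real.exp (2 * a * y) + 1)) ^ 2 * gaussPdf (y - a)

open Set

section Endpoints

variable {f : ℝ → ℝ} {f' a b : ℝ}

theorem IsMaxOn.hasDerivAt_nonpos_of_left (h : IsMaxOn f (Icc a b) a) (hab : a < b)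
    (hf : HasDerivAt f f' a) : f' ≤ 0 := by
  have := h.localize.hasFDerivWithinAt_nonpos hf.hasDerivWithinAt.hasFDerivWithinAt
    (sub_mem_posTangentConeAt_of_segment_subset (segment_eq_Icc hab.le).subset)
  simp only [ContinuousLinearMap.toSpanSingleton_apply, smul_eq_mul] at this
  exact nonpos_of_mul_nonpos_right this (sub_pos.2 hab)

theorem IsMaxOn.hasDerivAt_nonneg_of_right (h : IsMaxOn f (Icc a b) b) (hab : a < b)
    (hf : HasDerivAt f f' b) : 0 ≤ f' := by
  have := h.localize.hasFDerivWithinAt_nonpos hf.hasDerivWithinAt.hasFDerivWithinAt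
    (sub_mem_posTangentConeAt_of_segment_subset (by rw [segment_symm, segment_eq_Icc hab.le]))
  simp only [ContinuousLinearMap.toSpanSingleton_apply, smul_eq_mul] at this
  exact nonneg_of_mul_nonpos_right this (sub_neg.2 hab)

end Endpoints

section Weighted

variable {r : ℝ → ℝ} {c b τ : ℝ}

theorem not_isMaxOn_Icc_zero_of_even (hc : 0 < c) (hb : 0 < b) (hr : DifferentiableAt ℝ r 0)
    (heven : ∀ x, r (-x) = r x) (hr0 : 0 < r 0) :
    ¬ IsMaxOn (fun a => (a + c) ^ 2 * r a) (Icc 0 b) 0 := by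
  intro h
  have hr' : deriv r 0 = 0 := by
    have := deriv_comp_neg (f := r) (x := 0)
    simp only [heven, neg_zero] at this
    linarith
  have hf' : 2 * c * r 0 ≤ 0 := h.hasDerivAt_nonpos_of_left hb
    (((((hasDerivAt_id (0 : ℝ)).add_const c).pow 2).mul hr.hasDerivAt).congr_deriv (by simp [hr']))
  exact hf'.not_gt (by positivity)

theorem not_isMaxOn_Icc_of_isMaxOn_sq_mul (hc : 0 < c) (hτ : 0 < τ)
    (hr : DifferentiableAt ℝ r τ) (hrτ : 0 < r τ)
    (hmax : IsMaxOn (fun t => t ^ 2 * r t) (Ici 0) τ) :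
    ¬ IsMaxOn (fun a => (a + c) ^ 2 * r a) (Icc 0 τ) τ := by
  intro h
  have hstat : 2 * τ * r τ + τ ^ 2 * deriv r τ = 0 :=
    (hmax.isLocalMax (Ici_mem_nhds hτ)).hasDerivAt_eq_zero
      (((hasDerivAt_pow 2 τ).mul hr.hasDerivAt).congr_deriv (by ring))
  have hf' : 0 ≤ 2 * (τ + c) * r τ + (τ + c) ^ 2 * deriv r τ :=
    h.hasDerivAt_nonneg_of_right hτ
      (((((hasDerivAt_id τ).add_const c).pow 2).mul hr.hasDerivAt).congr_deriv (by simp))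
  have hscaled : τ ^ 2 * (2 * (τ + c) * r τ + (τ + c) ^ 2 * deriv r τ) =
      -(2 * c * τ * (τ + c) * r τ) := by
    linear_combination (τ + c) ^ 2 * hstat
  have : 0 < 2 * c * τ * (τ + c) * r τ := by positivity
  nlinarith [mul_nonneg (sq_nonneg τ) hf']

end Weighted

theorem gaussPdf_pos (x : ℝ) : 0 < gaussPdf x := by
  unfold gaussPdf
  positivity

theorem gaussPdf_neg (x : ℝ) : gaussPdf (-x) = gaussPdf x := by
  simp [gaussPdf]

theorem continuous_gaussPdf : Continuous gaussPdf := by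
  unfold gaussPdf
  fun_prop

theorem gaussPdf_eq_mul_exp (x : ℝ) : gaussPdf x = (√(2 * π))⁻¹ * exp (-2⁻¹ * x ^ 2) := by
  rw [gaussPdf]
  ring_nf

theorem integrable_gaussPdf : Integrable gaussPdf := by
  rw [funext gaussPdf_eq_mul_exp]
  exact (integrable_exp_neg_mul_sq (by norm_num)).const_mul _

theorem integrable_one_add_abs_mul_gaussPdf :
    Integrable fun t => (1 + |t|) * gaussPdf t := by
  have h := (integrable_mul_exp_neg_mul_sq (b := 2⁻¹) (by norm_num)).norm.const_mul (√(2 * π))⁻¹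
  refine (integrable_gaussPdf.add h).congr (ae_of_all _ fun t => ?_)
  simp only [Pi.add_apply, gaussPdf_eq_mul_exp, norm_mul, Real.norm_eq_abs,
    abs_of_pos (exp_pos _)]
  ring

theorem integrable_mul_gaussPdf_of_abs_le {g : ℝ → ℝ} {C : ℝ} (hg : Continuous g)
    (hC : ∀ t, |g t| ≤ C) : Integrable fun t => g t * gaussPdf t :=
  integrable_gaussPdf.bdd_mul hg.aestronglyMeasurable (ae_of_all _ hC)

theorem hasDerivAt_integral_mul_gaussPdf {F F' : ℝ → ℝ → ℝ} {a₀ C : ℝ}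
    (hF : ∀ a, Continuous (F a)) (hF_le : ∀ t, |F a₀ t| ≤ C)
    (hF' : ∀ a t, HasDerivAt (F · t) (F' a t) a) (hF'_cont : Continuous (F' a₀))
    (hF'_le : ∀ a ∈ Metric.ball a₀ 1, ∀ t, |F' a t| ≤ C * (1 + |t|)) :
    HasDerivAt (fun a => ∫ t, F a t * gaussPdf t) (∫ t, F' a₀ t * gaussPdf t) a₀ := by
  refine (hasDerivAt_integral_of_dominated_loc_of_deriv_le
    (bound := fun t => C * ((1 + |t|) * gaussPdf t)) (Metric.ball_mem_nhds a₀ one_pos)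
    (.of_forall fun a => ((hF a).mul continuous_gaussPdf).aestronglyMeasurable)
    (integrable_mul_gaussPdf_of_abs_le (hF a₀) hF_le)
    (hF'_cont.mul continuous_gaussPdf).aestronglyMeasurable
    (ae_of_all _ fun t a ha => ?_) (integrable_one_add_abs_mul_gaussPdf.const_mul C)
    (ae_of_all _ fun t a _ => (hF' a t).mul_const _)).2
  rw [norm_mul, Real.norm_eq_abs, Real.norm_eq_abs, abs_of_pos (gaussPdf_pos t), ← mul_assoc]
  exact mul_le_mul_of_nonneg_right (hF'_le a ha t) (gaussPdf_pos t).le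

theorem ρ_neg (a : ℝ) : ρ (-a) = ρ a := by
  rw [ρ, ρ, ← integral_neg_eq_self]
  congr 1 with y
  rw [show 2 * -a * -y = 2 * a * y by ring, show -y - -a = -(y - a) by ring, gaussPdf_neg]

theorem ρ_eq_integral_sigmoid (a : ℝ) :
    ρ a = ∫ t, sigmoid (-(2 * a * (t + a))) ^ 2 * gaussPdf t := by
  rw [ρ, ← integral_add_right_eq_self _ a]
  congr 1 with t
  rw [sigmoid_def, neg_neg, add_sub_cancel_right, one_div, add_comm]

theorem ρ_pos (a : ℝ) : 0 < ρ a := by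
  rw [ρ_eq_integral_sigmoid]
  have hcont : Continuous fun t => sigmoid (-(2 * a * (t + a))) ^ 2 := by fun_prop
  refine integral_pos_of_integrable_nonneg_nonzero (x := 0) (hcont.mul continuous_gaussPdf)
    (integrable_mul_gaussPdf_of_abs_le hcont (C := 1) fun t => ?_)
    (fun t => (mul_pos (pow_pos (sigmoid_pos _) 2) (gaussPdf_pos t)).le)
    (mul_pos (pow_pos (sigmoid_pos _) 2) (gaussPdf_pos 0)).ne'
  rw [abs_of_nonneg (by positivity)]
  exact pow_le_one₀ (sigmoid_nonneg _) (sigmoid_le_one _)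

theorem hasDerivAt_sigmoid_sq (a t : ℝ) :
    HasDerivAt (fun a => sigmoid (-(2 * a * (t + a))) ^ 2)
      (-(4 * (t + 2 * a)) *
        (sigmoid (-(2 * a * (t + a))) ^ 2 * (1 - sigmoid (-(2 * a * (t + a)))))) a := by
  have hu : HasDerivAt (fun a => -(2 * a * (t + a))) (-(2 * (t + 2 * a))) a :=
    (((hasDerivAt_id a).const_mul 2).mul ((hasDerivAt_id a).const_add t)).neg.congr_deriv
      (by simp only [id]; ring)
  exact (((hasDerivAt_sigmoid _).comp a hu).pow 2).congr_deriv (by rw [Function.comp_apply]; ring)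

theorem differentiable_ρ : Differentiable ℝ ρ := by
  intro a₀
  have hC : 0 ≤ 8 * (|a₀| + 1) := by positivity
  rw [funext ρ_eq_integral_sigmoid]
  refine (hasDerivAt_integral_mul_gaussPdf (C := 4 + 8 * (|a₀| + 1)) (fun a => by fun_prop)
    (fun t => ?_) hasDerivAt_sigmoid_sq (by fun_prop) fun a ha t => ?_).differentiableAt
  · rw [abs_of_nonneg (by positivity)]
    linarith [pow_le_one₀ (sigmoid_nonneg _) (sigmoid_le_one (-(2 * a₀ * (t + a₀)))) (n := 2)]
  · set s := sigmoid (-(2 * a * (t + a)))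
    have hs : 0 ≤ s ^ 2 * (1 - s) ∧ s ^ 2 * (1 - s) ≤ 1 := by
      have h0 := sigmoid_nonneg (-(2 * a * (t + a)))
      have h1 := sigmoid_le_one (-(2 * a * (t + a)))
      exact ⟨by positivity, mul_le_one₀ (pow_le_one₀ h0 h1) (by linarith) (by linarith)⟩
    have ha' : |a| ≤ |a₀| + 1 := by
      rw [Metric.mem_ball, Real.dist_eq] at ha
      linarith [abs_sub_abs_le_abs_sub a a₀]
    rw [abs_mul, abs_neg, abs_mul, abs_of_nonneg hs.1, abs_of_pos four_pos]
    calc 4 * |t + 2 * a| * (s ^ 2 * (1 - s)) ≤ 4 * |t + 2 * a| :=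
          mul_le_of_le_one_right (by positivity) hs.2
      _ ≤ 4 * (|t| + 2 * |a|) := by
          have := abs_add_le t (2 * a)
          rw [abs_mul, abs_two] at this
          linarith
      _ ≤ (4 + 8 * (|a₀| + 1)) * (1 + |t|) := by nlinarith [abs_nonneg t]

theorem stmt_8_general (σ k τstar : ℝ) (hσ : 0 < σ) (hk : 0 < k)
    (hτmax : ∀ τ : ℝ, 0 ≤ τ → τ ^ 2 * ρ τ ≤ τstar ^ 2 * ρ τstar) :
    ∀ astar ∈ Set.Icc 0 τstar,
      (∀ a ∈ Set.Icc 0 τstar,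
        (a + k / σ) ^ 2 * ρ a ≤ (astar + k / σ) ^ 2 * ρ astar) →
      0 < astar ∧ astar < τstar := by
  rintro astar ⟨h0, hτ⟩ hmax
  have hc : 0 < k / σ := div_pos hk hσ
  have hτpos : 0 < τstar := by
    refine (h0.trans hτ).lt_of_ne' fun hτ0 => ?_
    have := hτmax 1 zero_le_one
    rw [hτ0] at this
    linarith [ρ_pos 1]
  refine ⟨h0.lt_of_ne ?_, hτ.lt_of_ne ?_⟩ <;> rintro rfl
  · exact not_isMaxOn_Icc_zero_of_even hc hτpos (differentiable_ρ 0) ρ_neg (ρ_pos 0)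
      (isMaxOn_iff.2 hmax)
  · exact not_isMaxOn_Icc_of_isMaxOn_sq_mul hc hτpos (differentiable_ρ _) (ρ_pos _)
      (isMaxOn_iff.2 hτmax) (isMaxOn_iff.2 hmax)

/-- For k > 0 and σ > 0, any maximizer a* of ã ↦ (ã + k/σ)²ρ(ã) over [0, τ*]
satisfies 0 < a* < τ*. -/
theorem stmt_8 (σ k τstar : ℝ) (hσ : 0 < σ) (hk : 0 < k)
    (hτ0 : 0 ≤ τstar)
    (hτmax : ∀ τ : ℝ, 0 ≤ τ → τ ^ 2 * ρ τ ≤ τstar ^ 2 * ρ τstar) :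
    ∀ astar ∈ Set.Icc 0 τstar,
      (∀ a ∈ Set.Icc 0 τstar,
        (a + k / σ) ^ 2 * ρ a ≤ (astar + k / σ) ^ 2 * ρ astar) →
      0 < astar ∧ astar < τstar :=
  stmt_8_general σ k τstar hσ hk hτmax
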